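/- arXiv:2310.05152 — 3 statements merged into one kernel-verified Lean document; each statement's English description precedes it below -/
import Mathlib

section
/- For any function g in the Schwartz class on ℝ³, the L² norm of g is bounded by a constant times the L² norm of ∇(|x| g), i.e. ‖g‖_{L²} ≲ ‖∇(|x| g)‖_{L²}. -/
open MeasureTheory SchwartzMap ContinuousLinearMap
noncomputable section

local notation "E" => EuclideanSpace ℝ (Fin 3)

def ee (i : Fin 3) : E := EuclideanSpace.single i (1:ℝ)

def mulCoord (i : Fin 3) : SchwartzMap E ℂ →L[ℝ] SchwartzMap E ℂ :=
  SchwartzMap.bilinLeftCLM ((ContinuousLinearMap.lsmul ℝ ℝ : ℝ →L[ℝ] ℂ →L[ℝ] ℂ).flip)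
    (EuclideanSpace.proj i (𝕜 := ℝ)).hasTemperateGrowth

def Dmap (g : SchwartzMap E ℂ) : SchwartzMap E ℂ :=
  ∑ i : Fin 3, mulCoord i (LineDeriv.lineDerivOpCLM ℝ (SchwartzMap E ℂ) (ee i) g)

lemma sum_schwartz_apply {ι : Type*} (s : Finset ι) (f : ι → SchwartzMap E ℂ) (x : E) :
    (∑ i ∈ s, f i) x = ∑ i ∈ s, f i x := by
  have h : ⇑(∑ i ∈ s, f i) = ∑ i ∈ s, ⇑(f i) := map_sum (FunLike.coeAddMonoidHom (SchwartzMap E ℂ) E ℂ) f s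
  rw [h, Finset.sum_apply]

lemma sum_coord_smul (x : E) : ∑ i : Fin 3, (x i) • ee i = x := by
  ext j
  rw [show (∑ i : Fin 3, (x i) • ee i) j = ∑ i : Fin 3, (x i) • (ee i j) from by simp only [WithLp.ofLp_sum, WithLp.ofLp_smul, Finset.sum_apply, Pi.smul_apply]]
  simp [ee, EuclideanSpace.single_apply]

lemma Dmap_apply (g : SchwartzMap E ℂ) (x : E) : Dmap g x = fderiv ℝ g x x := by
  have : fderiv ℝ g x x = ∑ i : Fin 3, (x i) • fderiv ℝ g x (ee i) := by
    calc fderiv ℝ g x x = fderiv ℝ g x (∑ i : Fin 3, (x i) • ee i) := by rw [sum_coord_smul]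
    _ = _ := by rw [_root_.map_sum]; simp
  rw [this, Dmap, sum_schwartz_apply]
  rfl

open scoped RealInnerProductSpace

lemma coord_le_norm (x : E) (i : Fin 3) : |x i| ≤ ‖x‖ := by
  rw [EuclideanSpace.norm_eq]
  rw [← Real.sqrt_sq_eq_abs]
  apply Real.sqrt_le_sqrt
  have := Finset.single_le_sum (f := fun j => ‖x j‖^2) (fun j _ => by positivity)
    (Finset.mem_univ i)
  simpa [sq_abs] using this

lemma schwartz_bound (φ : SchwartzMap E ℂ) : ∃ C, ∀ x, ‖φ x‖ ≤ C := by
  obtain ⟨C, hC⟩ := φ.decay 0 0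
  exact ⟨C, fun x => by simpa using hC.2 x⟩

lemma schwartz_bound₁ (φ : SchwartzMap E ℂ) : ∃ C, ∀ x, (1 + ‖x‖) * ‖φ x‖ ≤ C := by
  obtain ⟨C0, hC0⟩ := φ.decay 0 0
  obtain ⟨C1, hC1⟩ := φ.decay 1 0
  refine ⟨C0 + C1, fun x => ?_⟩
  have h0 : ‖φ x‖ ≤ C0 := by simpa using hC0.2 x
  have h1 : ‖x‖ * ‖φ x‖ ≤ C1 := by simpa using hC1.2 x
  nlinarith [norm_nonneg (φ x), norm_nonneg x]

lemma integrable_inner (φ χ : SchwartzMap E ℂ) :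
    Integrable (fun x => ⟪φ x, χ x⟫) volume := by
  obtain ⟨C, hC⟩ := schwartz_bound φ
  refine (χ.integrable.norm.const_mul C).mono' ?_ ?_
  · exact (φ.continuous.inner χ.continuous).aestronglyMeasurable
  · filter_upwards with x
    calc ‖⟪φ x, χ x⟫‖ ≤ ‖φ x‖ * ‖χ x‖ := norm_inner_le_norm _ _
    _ ≤ C * ‖χ x‖ := by
        have := hC x
        have h2 : (0:ℝ) ≤ ‖χ x‖ := norm_nonneg _
        nlinarith [norm_nonneg (φ x)]

lemma integrable_coord_inner (i : Fin 3) (φ χ : SchwartzMap E ℂ) :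
    Integrable (fun x => (x i) * ⟪φ x, χ x⟫) volume := by
  obtain ⟨C, hC⟩ := schwartz_bound₁ φ
  refine (χ.integrable.norm.const_mul C).mono' ?_ ?_
  · exact ((EuclideanSpace.proj i (𝕜 := ℝ)).continuous.mul
      (φ.continuous.inner χ.continuous)).aestronglyMeasurable
  · filter_upwards with x
    have h1 : ‖(x i) * ⟪φ x, χ x⟫‖ ≤ |x i| * (‖φ x‖ * ‖χ x‖) := by
      rw [norm_mul]
      exact mul_le_mul_of_nonneg_left (norm_inner_le_norm _ _) (abs_nonneg _)
    have h2 : |x i| * (‖φ x‖ * ‖χ x‖) ≤ ((1 + ‖x‖) * ‖φ x‖) * ‖χ x‖ := by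
      have h := coord_le_norm x i
      have hb : |x i| * (‖φ x‖ * ‖χ x‖) ≤ ‖x‖ * (‖φ x‖ * ‖χ x‖) :=
        mul_le_mul_of_nonneg_right h (by positivity)
      nlinarith [norm_nonneg (φ x), norm_nonneg (χ x), norm_nonneg x]
    have h3 : ((1 + ‖x‖) * ‖φ x‖) * ‖χ x‖ ≤ C * ‖χ x‖ :=
      mul_le_mul_of_nonneg_right (hC x) (norm_nonneg _)
    simpa using h1.trans (h2.trans h3)

lemma integrable_normsq (φ : SchwartzMap E ℂ) : Integrable (fun x => ‖φ x‖^2) volume := by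
  have h := integrable_inner φ φ
  simpa [real_inner_self_eq_norm_sq] using h

lemma ee_apply_self (i : Fin 3) : ee i i = 1 := by
  simp [ee, EuclideanSpace.single_apply]

lemma ibp (g : SchwartzMap E ℂ) (i : Fin 3) :
    2 * ∫ x : E, (x i) * ⟪g x, fderiv ℝ g x (ee i)⟫ = - ∫ x : E, ‖g x‖^2 := by
  set pg := LineDeriv.lineDerivOpCLM ℝ (SchwartzMap E ℂ) (ee i) g with hpg
  have hpg_apply : ∀ x, pg x = fderiv ℝ g x (ee i) := fun x => rfl
  set f' : E → (E →L[ℝ] ℂ) :=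
    fun x => (x i) • fderiv ℝ g x + (EuclideanSpace.proj i (𝕜 := ℝ)).smulRight (g x) with hf'
  have hf'Deriv : ∀ x : E, HasFDerivAt (fun y : E => (y i) • g y) (f' x) x := by
    intro x
    exact ((EuclideanSpace.proj i (𝕜 := ℝ)).hasFDerivAt (x := x)).smul
      (g.differentiable x).hasFDerivAt
  have hgDeriv : ∀ x : E, HasFDerivAt (⇑g) (fderiv ℝ g x) x :=
    fun x => (g.differentiable x).hasFDerivAt
  have e1 : (fun x : E => ⟪f' x (ee i), g x⟫)
      = fun x => (x i) * ⟪pg x, g x⟫ + ‖g x‖^2 := by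
    funext x
    simp only [hf', ContinuousLinearMap.add_apply, ContinuousLinearMap.coe_smul',
      Pi.smul_apply, ContinuousLinearMap.smulRight_apply]
    rw [inner_add_left, real_inner_smul_left]
    have : (EuclideanSpace.proj i (𝕜 := ℝ)) (ee i) = 1 := by
      simpa using ee_apply_self i
    rw [this, one_smul, real_inner_self_eq_norm_sq, hpg_apply]
  have hf'g : Integrable (fun x : E => ⟪f' x (ee i), g x⟫) volume := by
    rw [e1]
    exact (integrable_coord_inner i pg g).add (integrable_normsq g)
  have hfg' : Integrable (fun x : E => ⟪(x i) • g x, fderiv ℝ g x (ee i)⟫) volume := by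
    have h := integrable_coord_inner i g pg
    refine h.congr ?_
    filter_upwards with x
    rw [real_inner_smul_left, hpg_apply]
  have hfg : Integrable (fun x : E => ⟪(x i) • g x, g x⟫) volume := by
    have h := integrable_coord_inner i g g
    refine h.congr ?_
    filter_upwards with x
    rw [real_inner_smul_left]
  have key := integral_bilinear_hasFDerivAt_right_eq_neg_left_of_integrable
    (μ := volume) (B := (innerSL ℝ : ℂ →L[ℝ] ℂ →L[ℝ] ℝ)) (v := ee i)
    (f := fun x : E => (x i) • g x) (f' := f') (g := ⇑g) (g' := fun x => fderiv ℝ g x)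
    ?_ ?_ ?_ (fun x _ => hf'Deriv x) (fun x _ => hgDeriv x)
  · -- key : ∫ ⟪(x i) • g x, fderiv g x (ee i)⟫ = - ∫ ⟪f' x (ee i), g x⟫
    have l1 : ∫ x : E, ⟪(x i) • g x, fderiv ℝ g x (ee i)⟫
        = ∫ x : E, (x i) * ⟪g x, fderiv ℝ g x (ee i)⟫ := by
      congr 1; funext x; rw [real_inner_smul_left]
    have l2 : ∫ x : E, ⟪f' x (ee i), g x⟫
        = (∫ x : E, (x i) * ⟪g x, fderiv ℝ g x (ee i)⟫) + ∫ x : E, ‖g x‖^2 := by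
      rw [e1, integral_add (integrable_coord_inner i pg g) (integrable_normsq g)]
      congr 1
      congr 1; funext x; rw [hpg_apply, real_inner_comm]
    have key' : (∫ x : E, ⟪(x i) • g x, fderiv ℝ g x (ee i)⟫)
        = - ∫ x : E, ⟪f' x (ee i), g x⟫ := key
    rw [l1, l2] at key'
    linarith [key']
  · exact hf'g
  · exact hfg'
  · exact hfg

lemma inner_Dmap (g : SchwartzMap E ℂ) (x : E) :
    ⟪g x, Dmap g x⟫ = ∑ i : Fin 3, (x i) * ⟪g x, fderiv ℝ g x (ee i)⟫ := by
  rw [Dmap, sum_schwartz_apply, inner_sum]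
  congr 1; funext i
  show ⟪g x, (x i) • (LineDeriv.lineDerivOpCLM ℝ (SchwartzMap E ℂ) (ee i) g) x⟫ = _
  rw [real_inner_smul_right]
  rfl

lemma key_identity (g : SchwartzMap E ℂ) :
    2 * ∫ x : E, ⟪g x, Dmap g x⟫ = -3 * ∫ x : E, ‖g x‖^2 := by
  have hint : ∀ i : Fin 3, Integrable (fun x : E => (x i) * ⟪g x, fderiv ℝ g x (ee i)⟫) volume := by
    intro i
    exact (integrable_coord_inner i g (LineDeriv.lineDerivOpCLM ℝ (SchwartzMap E ℂ) (ee i) g)).congr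
      (by filter_upwards with x; rfl)
  have e1 : ∫ x : E, ⟪g x, Dmap g x⟫
      = ∑ i : Fin 3, ∫ x : E, (x i) * ⟪g x, fderiv ℝ g x (ee i)⟫ := by
    rw [← integral_finset_sum _ (fun i _ => hint i)]
    congr 1; funext x
    exact inner_Dmap g x
  rw [e1, Finset.mul_sum]
  have e2 : ∀ i : Fin 3, 2 * ∫ x : E, (x i) * ⟪g x, fderiv ℝ g x (ee i)⟫
      = - ∫ x : E, ‖g x‖^2 := fun i => ibp g i
  rw [Finset.sum_congr rfl (fun i _ => e2 i)]
  simp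

lemma integral_add3 {f g h : E → ℝ} (hf : Integrable f volume)
    (hg : Integrable g volume) (hh : Integrable h volume) :
    ∫ x : E, (f x + g x + h x) = (∫ x : E, f x) + (∫ x : E, g x) + ∫ x : E, h x := by
  have h12 : Integrable (fun x => f x + g x) volume := hf.add hg
  rw [show (fun x : E => f x + g x + h x) = fun x : E => (f x + g x) + h x from rfl,
    integral_add h12 hh, integral_add hf hg]

lemma P_le_4S (g : SchwartzMap E ℂ) :
    (∫ x : E, ‖g x‖^2) ≤ 4 * ∫ x : E, ‖(g + Dmap g) x‖^2 := by
  set P := ∫ x : E, ‖g x‖^2 with hP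
  set Q := ∫ x : E, ‖Dmap g x‖^2 with hQ
  set I := ∫ x : E, ⟪g x, Dmap g x⟫ with hI
  have hIP : 2 * I = -3 * P := key_identity g
  have hiP := integrable_normsq g
  have hiQ := integrable_normsq (Dmap g)
  have hiI := integrable_inner g (Dmap g)
  have hS : (∫ x : E, ‖(g + Dmap g) x‖^2) = P + 2 * I + Q := by
    have e : (fun x : E => ‖(g + Dmap g) x‖^2)
        = fun x => ‖g x‖^2 + 2 * ⟪g x, Dmap g x⟫ + ‖Dmap g x‖^2 := by
      funext x
      show ‖g x + Dmap g x‖^2 = _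
      exact norm_add_sq_real _ _
    rw [e, integral_add3 hiP (hiI.const_mul 2) hiQ, integral_const_mul]
  have hT : 0 ≤ (9/4) * P + 3 * I + Q := by
    have e : (fun x : E => ‖(3/2:ℝ) • g x + Dmap g x‖^2)
        = fun x => (9/4) * ‖g x‖^2 + (3 * ⟪g x, Dmap g x⟫ + ‖Dmap g x‖^2) := by
      funext x
      rw [norm_add_sq_real, norm_smul, real_inner_smul_left]
      norm_num
      ring
    have h0 : 0 ≤ ∫ x : E, ‖(3/2:ℝ) • g x + Dmap g x‖^2 :=
      integral_nonneg (fun x => by positivity)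
    rw [e, show (fun x : E => (9/4) * ‖g x‖^2 + (3 * ⟪g x, Dmap g x⟫ + ‖Dmap g x‖^2))
        = fun x : E => (9/4) * ‖g x‖^2 + 3 * ⟪g x, Dmap g x⟫ + ‖Dmap g x‖^2 from
        funext fun x => by ring,
      integral_add3 (hiP.const_mul _) (hiI.const_mul 3) hiQ,
      integral_const_mul, integral_const_mul] at h0
    linarith
  have hP0 : 0 ≤ P := integral_nonneg (fun x => by positivity)
  rw [hS]
  linarith

lemma hasFDerivAt_norm' (x : E) (hx : x ≠ 0) :
    HasFDerivAt (fun y : E => ‖y‖) (‖x‖⁻¹ • (innerSL ℝ x : E →L[ℝ] ℝ)) x := by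
  have hsq : HasFDerivAt (fun y : E => ‖y‖^2) (2 • (innerSL ℝ x : E →L[ℝ] ℝ)) x :=
    (hasStrictFDerivAt_norm_sq x).hasFDerivAt
  have hne : ‖x‖^2 ≠ 0 := pow_ne_zero 2 (norm_ne_zero_iff.mpr hx)
  have hsqrt := (Real.hasDerivAt_sqrt hne).comp_hasFDerivAt x hsq
  rw [show ((fun t => Real.sqrt t) ∘ fun y : E => ‖y‖^2) = fun y : E => ‖y‖ from
    funext fun y => Real.sqrt_sq (norm_nonneg y)] at hsqrt
  refine hsqrt.congr_fderiv (Eq.symm ?_)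
  rw [Real.sqrt_sq (norm_nonneg x)]
  ext v
  simp only [ContinuousLinearMap.coe_smul', Pi.smul_apply, smul_eq_mul]
  have hxn : ‖x‖ ≠ 0 := norm_ne_zero_iff.mpr hx
  field_simp
  ring

lemma T_le_fderiv_u (g : SchwartzMap E ℂ) (x : E) (hx : x ≠ 0) :
    ‖(g + Dmap g) x‖ ≤ ‖fderiv ℝ (fun y : E => ‖y‖ • g y) x‖ := by
  have hu : HasFDerivAt (fun y : E => ‖y‖ • g y)
      (‖x‖ • fderiv ℝ g x + (‖x‖⁻¹ • (innerSL ℝ x : E →L[ℝ] ℝ)).smulRight (g x)) x :=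
    (hasFDerivAt_norm' x hx).smul (g.differentiable x).hasFDerivAt
  rw [hu.fderiv]
  set L := ‖x‖ • fderiv ℝ g x + (‖x‖⁻¹ • (innerSL ℝ x : E →L[ℝ] ℝ)).smulRight (g x) with hL
  have hxn : ‖x‖ ≠ 0 := norm_ne_zero_iff.mpr hx
  have hv : ‖(‖x‖⁻¹ • x : E)‖ = 1 := by
    rw [norm_smul, norm_inv, norm_norm, inv_mul_cancel₀ hxn]
  have happ : L (‖x‖⁻¹ • x) = (g + Dmap g) x := by
    show ‖x‖ • fderiv ℝ g x (‖x‖⁻¹ • x)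
        + (‖x‖⁻¹ * ⟪x, (‖x‖⁻¹ • x : E)⟫) • g x = _
    rw [real_inner_smul_right, real_inner_self_eq_norm_sq]
    rw [(fderiv ℝ g x).map_smul]
    rw [smul_smul]
    rw [mul_inv_cancel₀ hxn]
    have : ‖x‖⁻¹ * (‖x‖⁻¹ * ‖x‖^2) = 1 := by field_simp
    rw [this, one_smul, one_smul]
    show fderiv ℝ g x x + g x = g x + Dmap g x
    rw [Dmap_apply, add_comm]
  calc ‖(g + Dmap g) x‖ = ‖L (‖x‖⁻¹ • x)‖ := by rw [happ]
  _ ≤ ‖L‖ * ‖(‖x‖⁻¹ • x : E)‖ := L.le_opNorm _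
  _ = ‖L‖ := by rw [hv, mul_one]

lemma lintegral_normsq (φ : SchwartzMap E ℂ) :
    ∫⁻ x : E, (‖φ x‖₊ : ENNReal)^(2:ℝ) = ENNReal.ofReal (∫ x : E, ‖φ x‖^2) := by
  rw [ofReal_integral_eq_lintegral_ofReal (integrable_normsq φ)
    (Filter.Eventually.of_forall fun x => by positivity)]
  congr 1
  funext x
  rw [← Real.rpow_natCast ‖φ x‖ 2, ← ENNReal.ofReal_rpow_of_nonneg (norm_nonneg _) (by norm_num),
    ofReal_norm, enorm_eq_nnnorm]
  norm_num

/-- **Hardy inequality** on `ℝ³`: `‖g‖_{L²} ≲ ‖∇(|x| g)‖_{L²}` for Schwartz functions. -/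
theorem hardy_inequality_L2 :
    ∃ C : ℝ, 0 < C ∧ ∀ g : SchwartzMap (EuclideanSpace ℝ (Fin 3)) ℂ,
      eLpNorm (⇑g) 2 volume ≤
        ENNReal.ofReal C *
          eLpNorm (fun x => fderiv ℝ (fun y : EuclideanSpace ℝ (Fin 3) => ‖y‖ • g y) x)
            2 volume := by

  refine ⟨2, two_pos, fun g => ?_⟩
  set T : SchwartzMap E ℂ := g + Dmap g with hT
  set J : ENNReal :=
    ∫⁻ x : E, (‖fderiv ℝ (fun y : E => ‖y‖ • g y) x‖₊ : ENNReal)^(2:ℝ) with hJ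
  have hp1 : (2:ENNReal) ≠ 0 := two_ne_zero
  have hp2 : (2:ENNReal) ≠ ⊤ := ENNReal.ofNat_ne_top
  have htr : (2:ENNReal).toReal = (2:ℝ) := by norm_num
  have hLHS : eLpNorm (⇑g) 2 volume
      = (ENNReal.ofReal (∫ x : E, ‖g x‖^2))^(1/(2:ℝ)) := by
    rw [eLpNorm_eq_lintegral_rpow_enorm_toReal hp1 hp2, htr, ← lintegral_normsq g]
    rfl
  have hRHS : eLpNorm (fun x => fderiv ℝ (fun y : E => ‖y‖ • g y) x) 2 volume
      = J^(1/(2:ℝ)) := by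
    rw [eLpNorm_eq_lintegral_rpow_enorm_toReal hp1 hp2, htr, hJ]
    rfl
  have hae : ∀ᵐ x : E ∂volume, x ≠ 0 := by
    refine ae_iff.mpr ?_
    simp [not_not, Set.setOf_eq_eq_singleton, measure_singleton]
  have hstep : ENNReal.ofReal (∫ x : E, ‖g x‖^2) ≤ 4 * J := by
    calc ENNReal.ofReal (∫ x : E, ‖g x‖^2)
        ≤ ENNReal.ofReal (4 * ∫ x : E, ‖T x‖^2) := ENNReal.ofReal_le_ofReal (P_le_4S g)
    _ = ENNReal.ofReal 4 * ENNReal.ofReal (∫ x : E, ‖T x‖^2) :=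
        ENNReal.ofReal_mul (by norm_num)
    _ = 4 * ∫⁻ x : E, (‖T x‖₊ : ENNReal)^(2:ℝ) := by
        rw [lintegral_normsq T]; norm_num
    _ ≤ 4 * J := by
        refine mul_le_mul_right ?_ 4
        refine lintegral_mono_ae ?_
        filter_upwards [hae] with x hx
        have h := T_le_fderiv_u g x hx
        have hn : (‖T x‖₊ : ENNReal) ≤ ‖fderiv ℝ (fun y : E => ‖y‖ • g y) x‖₊ := by
          exact_mod_cast h
        exact ENNReal.rpow_le_rpow hn (by norm_num)
  have h4 : ((4:ENNReal))^(1/(2:ℝ)) = 2 := by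
    rw [show (4:ENNReal) = (2:ENNReal)^(2:ℕ) by norm_num, ← ENNReal.rpow_natCast,
      ← ENNReal.rpow_mul]
    norm_num
  calc eLpNorm (⇑g) 2 volume = (ENNReal.ofReal (∫ x : E, ‖g x‖^2))^(1/(2:ℝ)) := hLHS
  _ ≤ (4 * J)^(1/(2:ℝ)) := ENNReal.rpow_le_rpow hstep (by norm_num)
  _ = (4:ENNReal)^(1/(2:ℝ)) * J^(1/(2:ℝ)) := ENNReal.mul_rpow_of_nonneg _ _ (by norm_num)
  _ = 2 * J^(1/(2:ℝ)) := by rw [h4]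
  _ = ENNReal.ofReal 2 *
      eLpNorm (fun x => fderiv ℝ (fun y : E => ‖y‖ • g y) x) 2 volume := by
    rw [hRHS]
    norm_num
end
end

section
/- For any function g in the Schwartz class on ℝ³, ‖g‖_{L¹(ℝ³)} ≤ C ‖|x| g‖_{L²}^{1/2} ‖|x|² g‖_{L²}^{1/2} for some universal constant C. -/
open MeasureTheory Metric Set
open scoped ENNReal

noncomputable section

local notation "E" => EuclideanSpace ℝ (Fin 3)

lemma cover_ball : ball (0 : E) 1 ⊆ {(0:E)} ∪ ⋃ n : ℕ,
    (closedBall (0:E) ((2⁻¹ : ℝ) ^ n) \ ball (0:E) ((2⁻¹ : ℝ) ^ (n+1))) := by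
  intro y hy
  rcases eq_or_ne y 0 with h | h
  · exact Or.inl h
  right
  have hy1 : ‖y‖ < 1 := by simpa using hy
  have hy0 : 0 < ‖y‖ := norm_pos_iff.2 h
  have hex : ∃ n : ℕ, (2⁻¹ : ℝ) ^ n < ‖y‖ :=
    exists_pow_lt_of_lt_one hy0 (by norm_num)
  classical
  let n := Nat.find hex
  have hn : (2⁻¹ : ℝ) ^ n < ‖y‖ := Nat.find_spec hex
  have hn0 : n ≠ 0 := by
    intro h0
    have := hn
    rw [h0] at this
    simp at this
    linarith
  obtain ⟨m, hmn⟩ : ∃ m, n = m + 1 := ⟨n - 1, (Nat.succ_pred_eq_of_pos (Nat.pos_of_ne_zero hn0)).symm⟩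
  have hm : ¬ ((2⁻¹ : ℝ) ^ m < ‖y‖) := Nat.find_min hex (lt_of_lt_of_eq (Nat.lt_succ_self m) hmn.symm)
  rw [hmn] at hn
  refine mem_iUnion.2 ⟨m, ?_, ?_⟩
  · simpa [mem_closedBall, dist_zero_right] using not_lt.1 hm
  · simp only [mem_ball, dist_zero_right, not_lt]
    exact hn.le

lemma ball_part : ∫⁻ x : E in ball (0 : E) 1, ((‖x‖₊ : ℝ≥0∞) ^ 2)⁻¹ < ⊤ := by
  calc ∫⁻ x : E in ball (0 : E) 1, ((‖x‖₊ : ℝ≥0∞) ^ 2)⁻¹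
      ≤ ∫⁻ x : E in {(0:E)} ∪ ⋃ n : ℕ,
          (closedBall (0:E) ((2⁻¹ : ℝ) ^ n) \ ball (0:E) ((2⁻¹ : ℝ) ^ (n+1))),
          ((‖x‖₊ : ℝ≥0∞) ^ 2)⁻¹ := lintegral_mono_set cover_ball
    _ ≤ (∫⁻ x : E in {(0:E)}, ((‖x‖₊ : ℝ≥0∞) ^ 2)⁻¹) + ∑' n : ℕ, ∫⁻ x : E in
          (closedBall (0:E) ((2⁻¹ : ℝ) ^ n) \ ball (0:E) ((2⁻¹ : ℝ) ^ (n+1))),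
          ((‖x‖₊ : ℝ≥0∞) ^ 2)⁻¹ := by
        refine (lintegral_union_le _ _ _).trans ?_
        gcongr
        exact lintegral_iUnion_le _ _
    _ ≤ 0 + ∑' n : ℕ, (ENNReal.ofReal 4 * (ENNReal.ofReal 2⁻¹) ^ n) * volume (closedBall (0:E) 1) := by
        gcongr with n
        · have : (volume : Measure E) {(0:E)} = 0 := measure_singleton 0
          rw [setLIntegral_measure_zero _ _ this]
        · set s := closedBall (0:E) ((2⁻¹:ℝ)^n) \ ball (0:E) ((2⁻¹:ℝ)^(n+1)) with hs
          have hb : ∀ x ∈ s, ((‖x‖₊ : ℝ≥0∞)^2)⁻¹ ≤ ENNReal.ofReal (4 * 4 ^ n) := by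
            intro x hx
            have hx2 : (2⁻¹:ℝ)^(n+1) ≤ ‖x‖ := by
              have := hx.2
              simpa [mem_ball, dist_zero_right, not_lt] using this
            have hpos : (0:ℝ) < (2⁻¹:ℝ)^(n+1) := by positivity
            have h1 : ENNReal.ofReal ((2⁻¹:ℝ)^(n+1)) ≤ (‖x‖₊ : ℝ≥0∞) := by
              rw [← enorm_eq_nnnorm, ← ofReal_norm]
              exact ENNReal.ofReal_le_ofReal hx2
            have h2 : ENNReal.ofReal (((2⁻¹:ℝ)^(n+1))^2) ≤ (‖x‖₊:ℝ≥0∞)^2 := by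
              rw [ENNReal.ofReal_pow hpos.le]
              gcongr
            calc ((‖x‖₊ : ℝ≥0∞)^2)⁻¹
                ≤ (ENNReal.ofReal (((2⁻¹:ℝ)^(n+1))^2))⁻¹ := by gcongr
              _ = ENNReal.ofReal ((((2⁻¹:ℝ)^(n+1))^2)⁻¹) :=
                  (ENNReal.ofReal_inv_of_pos (by positivity)).symm
              _ = ENNReal.ofReal (4 * 4^n) := by
                  congr 1
                  rw [← pow_mul, inv_pow, inv_inv]
                  rw [show (n+1)*2 = 2*n+2 by ring, pow_add, pow_mul]
                  norm_num
                  ring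
          calc ∫⁻ x in s, ((‖x‖₊:ℝ≥0∞)^2)⁻¹
              ≤ ∫⁻ _x in s, ENNReal.ofReal (4*4^n) := setLIntegral_mono measurable_const hb
            _ = ENNReal.ofReal (4*4^n) * volume s := by rw [setLIntegral_const]
            _ ≤ ENNReal.ofReal (4*4^n) * (ENNReal.ofReal (((2⁻¹:ℝ)^n) ^ 3) * volume (closedBall (0:E) 1)) := by
                gcongr
                calc volume s ≤ volume (closedBall (0:E) ((2⁻¹:ℝ)^n)) := measure_mono diff_subset
                  _ = _ := by
                      rw [Measure.addHaar_closedBall' volume _ (by positivity)]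
                      congr 2
                      simp [finrank_euclideanSpace]
            _ = ENNReal.ofReal 4 * (ENNReal.ofReal 2⁻¹)^n * volume (closedBall (0:E) 1) := by
                rw [← mul_assoc, ← ENNReal.ofReal_mul (by positivity),
                  ← ENNReal.ofReal_pow (by norm_num), ← ENNReal.ofReal_mul (by norm_num)]
                congr 2
                rw [mul_assoc, ← pow_mul, mul_comm n 3, pow_mul, ← mul_pow]
                norm_num
    _ < ⊤ := by
        rw [zero_add, ENNReal.tsum_mul_right, ENNReal.tsum_mul_left, ENNReal.tsum_geometric]
        have h2 : ((1 : ℝ≥0∞) - ENNReal.ofReal 2⁻¹)⁻¹ ≠ ⊤ := by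
          rw [ENNReal.inv_ne_top]
          intro h
          have : ENNReal.ofReal 2⁻¹ < 1 := by
            rw [show (1:ℝ≥0∞) = ENNReal.ofReal 1 by simp]
            exact ENNReal.ofReal_lt_ofReal_iff_of_nonneg (by norm_num) |>.2 (by norm_num)
          rw [tsub_eq_zero_iff_le] at h
          exact absurd h (not_le.2 this)
        exact ENNReal.mul_lt_top
          (ENNReal.mul_lt_top ENNReal.ofReal_lt_top h2.lt_top)
          measure_closedBall_lt_top

lemma J_lt_top : ∫⁻ x : E, ((‖x‖₊ : ℝ≥0∞) ^ 2 + (‖x‖₊ : ℝ≥0∞) ^ 4)⁻¹ < ⊤ := by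
  have hbound : ∀ x : E, ((‖x‖₊ : ℝ≥0∞) ^ 2 + (‖x‖₊ : ℝ≥0∞) ^ 4)⁻¹ ≤
      (ball (0:E) 1).indicator (fun x => ((‖x‖₊ : ℝ≥0∞) ^ 2)⁻¹) x
        + (ball (0:E) 1)ᶜ.indicator
            (fun x => ENNReal.ofReal 16 * ENNReal.ofReal ((1 + ‖x‖) ^ (-4 : ℝ))) x := by
    intro x
    by_cases hx : x ∈ ball (0:E) 1
    · refine le_trans ?_ (le_add_of_nonneg_right zero_le)
      rw [indicator_of_mem hx]
      exact ENNReal.inv_le_inv.2 (le_add_of_nonneg_right zero_le)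
    · refine le_trans ?_ (le_add_of_nonneg_left zero_le)
      rw [indicator_of_mem (mem_compl hx)]
      have hx1 : (1:ℝ) ≤ ‖x‖ := by simpa [mem_ball, dist_zero_right] using hx
      have hxpos : (0:ℝ) < ‖x‖ := lt_of_lt_of_le one_pos hx1
      calc ((‖x‖₊ : ℝ≥0∞) ^ 2 + (‖x‖₊ : ℝ≥0∞) ^ 4)⁻¹
          ≤ ((‖x‖₊ : ℝ≥0∞) ^ 4)⁻¹ := ENNReal.inv_le_inv.2 (le_add_of_nonneg_left zero_le)
        _ = ENNReal.ofReal ((‖x‖ ^ 4)⁻¹) := by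
            rw [← enorm_eq_nnnorm, ← ofReal_norm, ← ENNReal.ofReal_pow (norm_nonneg x),
              ENNReal.ofReal_inv_of_pos (by positivity)]
        _ ≤ ENNReal.ofReal (16 * (1 + ‖x‖) ^ (-4 : ℝ)) := by
            apply ENNReal.ofReal_le_ofReal
            rw [Real.rpow_neg (by positivity), show (4:ℝ) = ((4:ℕ):ℝ) by norm_num,
              Real.rpow_natCast]
            have h4 : (1 + ‖x‖) ^ 4 ≤ 16 * ‖x‖ ^ 4 := by
              calc (1 + ‖x‖) ^ 4 ≤ (2 * ‖x‖) ^ 4 := by gcongr; linarith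
                _ = 16 * ‖x‖ ^ 4 := by ring
            calc (‖x‖ ^ 4)⁻¹ = 16 * (16 * ‖x‖ ^ 4)⁻¹ := by
                  rw [mul_inv, ← mul_assoc]
                  norm_num
              _ ≤ 16 * (((1 + ‖x‖) ^ 4)⁻¹) := by gcongr <;> positivity
        _ = ENNReal.ofReal 16 * ENNReal.ofReal ((1 + ‖x‖) ^ (-4 : ℝ)) := by
            rw [ENNReal.ofReal_mul (by norm_num)]
  calc ∫⁻ x : E, ((‖x‖₊ : ℝ≥0∞) ^ 2 + (‖x‖₊ : ℝ≥0∞) ^ 4)⁻¹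
      ≤ ∫⁻ x : E, ((ball (0:E) 1).indicator (fun x => ((‖x‖₊ : ℝ≥0∞) ^ 2)⁻¹) x
        + (ball (0:E) 1)ᶜ.indicator
            (fun x => ENNReal.ofReal 16 * ENNReal.ofReal ((1 + ‖x‖) ^ (-4 : ℝ))) x) :=
        lintegral_mono hbound
    _ ≤ (∫⁻ x : E in ball (0:E) 1, ((‖x‖₊ : ℝ≥0∞) ^ 2)⁻¹)
        + ∫⁻ x : E in (ball (0:E) 1)ᶜ, ENNReal.ofReal 16 * ENNReal.ofReal ((1 + ‖x‖) ^ (-4 : ℝ)) := by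
        rw [lintegral_add_left (Measurable.indicator (by fun_prop) measurableSet_ball),
          lintegral_indicator measurableSet_ball, lintegral_indicator measurableSet_ball.compl]
    _ < ⊤ := by
        apply ENNReal.add_lt_top.2
        constructor
        · exact ball_part
        · calc ∫⁻ x : E in (ball (0:E) 1)ᶜ, ENNReal.ofReal 16 * ENNReal.ofReal ((1 + ‖x‖) ^ (-4 : ℝ))
              ≤ ∫⁻ x : E, ENNReal.ofReal 16 * ENNReal.ofReal ((1 + ‖x‖) ^ (-4 : ℝ)) :=
                setLIntegral_le_lintegral _ _
            _ = ENNReal.ofReal 16 * ∫⁻ x : E, ENNReal.ofReal ((1 + ‖x‖) ^ (-4 : ℝ)) := by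
                rw [lintegral_const_mul]
                fun_prop
            _ < ⊤ := by
                apply ENNReal.mul_lt_top ENNReal.ofReal_lt_top
                apply finite_integral_one_add_norm
                simp [finrank_euclideanSpace]
                norm_num

lemma weight_meas (R : ℝ) : Measurable (fun x : E =>
    (ENNReal.ofReal R * (‖x‖₊ : ℝ≥0∞) ^ 2 + (‖x‖₊ : ℝ≥0∞) ^ 4)⁻¹) := by
  fun_prop

lemma scaled_weight (R : ℝ) (hR : 0 < R) :
    ∫⁻ x : E, (ENNReal.ofReal R * (‖x‖₊ : ℝ≥0∞) ^ 2 + (‖x‖₊ : ℝ≥0∞) ^ 4)⁻¹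
      = ENNReal.ofReal (Real.sqrt R)⁻¹ *
        ∫⁻ x : E, ((‖x‖₊ : ℝ≥0∞) ^ 2 + (‖x‖₊ : ℝ≥0∞) ^ 4)⁻¹ := by
  set c : ℝ := Real.sqrt R with hc
  have hc0 : 0 < c := Real.sqrt_pos.2 hR
  have hc2 : c ^ 2 = R := Real.sq_sqrt hR.le
  have hmap : Measure.map (c • · : E → E) volume
      = ENNReal.ofReal |((c ^ Module.finrank ℝ E))⁻¹| • volume :=
    Measure.map_addHaar_smul volume hc0.ne'
  have key : ∫⁻ y : E, (ENNReal.ofReal R * (‖c • y‖₊ : ℝ≥0∞) ^ 2 + (‖c • y‖₊ : ℝ≥0∞) ^ 4)⁻¹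
      = ENNReal.ofReal ((c ^ 3)⁻¹) *
        ∫⁻ x : E, (ENNReal.ofReal R * (‖x‖₊ : ℝ≥0∞) ^ 2 + (‖x‖₊ : ℝ≥0∞) ^ 4)⁻¹ := by
    rw [← lintegral_map (weight_meas R) (measurable_const_smul c), hmap,
      lintegral_smul_measure]
    congr 2
    · rw [abs_of_nonneg (by positivity)]
      congr 2
      simp [finrank_euclideanSpace]
  -- now rewrite LHS of key pointwise
  have hpt : ∀ y : E, (ENNReal.ofReal R * (‖c • y‖₊ : ℝ≥0∞) ^ 2 + (‖c • y‖₊ : ℝ≥0∞) ^ 4)⁻¹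
      = (ENNReal.ofReal (c ^ 4))⁻¹ * ((‖y‖₊ : ℝ≥0∞) ^ 2 + (‖y‖₊ : ℝ≥0∞) ^ 4)⁻¹ := by
    intro y
    have hnorm : (‖c • y‖₊ : ℝ≥0∞) = ENNReal.ofReal c * (‖y‖₊ : ℝ≥0∞) := by
      rw [← enorm_eq_nnnorm, ← enorm_eq_nnnorm, ← ofReal_norm, ← ofReal_norm, norm_smul,
        Real.norm_eq_abs, abs_of_pos hc0, ENNReal.ofReal_mul hc0.le]
    rw [hnorm]
    have : ENNReal.ofReal R * (ENNReal.ofReal c * (‖y‖₊ : ℝ≥0∞)) ^ 2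
        + (ENNReal.ofReal c * (‖y‖₊ : ℝ≥0∞)) ^ 4
        = ENNReal.ofReal (c ^ 4) * ((‖y‖₊ : ℝ≥0∞) ^ 2 + (‖y‖₊ : ℝ≥0∞) ^ 4) := by
      have e1 : ENNReal.ofReal R * (ENNReal.ofReal c) ^ 2 = ENNReal.ofReal (c ^ 4) := by
        rw [← ENNReal.ofReal_pow hc0.le, ← ENNReal.ofReal_mul hR.le]
        congr 1
        rw [← hc2]
        ring
      have e2 : (ENNReal.ofReal c) ^ 4 = ENNReal.ofReal (c ^ 4) :=
        (ENNReal.ofReal_pow hc0.le 4).symm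
      rw [mul_pow, mul_pow, ← mul_assoc, e1, e2, mul_add]
    rw [this, ENNReal.mul_inv (Or.inl (by simp [ENNReal.ofReal_pos]; positivity)) (Or.inl ENNReal.ofReal_ne_top)]
  rw [funext hpt] at key
  rw [lintegral_const_mul _ (by fun_prop)] at key
  -- key : ofReal (c^4)⁻¹ * J = ofReal (c^3)⁻¹ * LHS
  have hJne : (ENNReal.ofReal ((c ^ 3)⁻¹)) ≠ 0 := by
    simp [ENNReal.ofReal_pos]
    positivity
  have := congrArg (fun t => ENNReal.ofReal (c ^ 3) * t) key
  rw [← mul_assoc, ← mul_assoc, ← ENNReal.ofReal_mul (by positivity),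
    mul_inv_cancel₀ (by positivity), ENNReal.ofReal_one, one_mul] at this
  rw [← this, ← ENNReal.ofReal_inv_of_pos (by positivity : (0:ℝ) < c ^ 4),
    ← ENNReal.ofReal_mul (by positivity)]
  congr 2
  field_simp

lemma holder_step {φ : E → ℝ≥0∞} (hφ : Measurable φ) (R : ℝ) (hR : 0 < R) :
    ∫⁻ x : E, φ x ≤
      (∫⁻ x : E, (ENNReal.ofReal R * (‖x‖₊:ℝ≥0∞)^2 + (‖x‖₊:ℝ≥0∞)^4)⁻¹) ^ (1/2:ℝ) *
      (∫⁻ x : E, (ENNReal.ofReal R * (‖x‖₊:ℝ≥0∞)^2 + (‖x‖₊:ℝ≥0∞)^4) * φ x ^ 2) ^ (1/2:ℝ) := by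
  set w : E → ℝ≥0∞ := fun x => ENNReal.ofReal R * (‖x‖₊:ℝ≥0∞)^2 + (‖x‖₊:ℝ≥0∞)^4 with hw
  have hwm : Measurable w := by fun_prop
  set f : E → ℝ≥0∞ := fun x => (w x)⁻¹ ^ ((1:ℝ)/2) with hf
  set h : E → ℝ≥0∞ := fun x => (w x) ^ ((1:ℝ)/2) * φ x with hh
  have hfm : Measurable f := hwm.inv.pow_const _
  have hhm : Measurable h := (hwm.pow_const _).mul hφ
  have hae : ∀ᵐ x : E ∂volume, x ≠ (0:E) := by
    have hset : {x : E | ¬ x ≠ 0} = {(0:E)} := by ext x; simp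
    rw [ae_iff, hset]
    exact measure_singleton 0
  have hstep1 : ∫⁻ x : E, φ x = ∫⁻ x : E, (f * h) x := by
    refine lintegral_congr_ae (hae.mono fun x hx => ?_)
    have hw0 : w x ≠ 0 := by
      intro hzero
      rw [hw] at hzero
      simp only [add_eq_zero] at hzero
      have := hzero.2
      simp [pow_eq_zero_iff] at this
      exact hx (norm_eq_zero.1 (by simpa using this))
    have hwt : w x ≠ ⊤ := by
      rw [hw]
      exact ENNReal.add_ne_top.2 ⟨ENNReal.mul_ne_top ENNReal.ofReal_ne_top
        (by simp), by simp⟩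
    simp only [Pi.mul_apply, hf, hh]
    rw [← mul_assoc, ← ENNReal.mul_rpow_of_nonneg _ _ (by norm_num),
      ENNReal.inv_mul_cancel hw0 hwt, ENNReal.one_rpow, one_mul]
  have hconj : Real.HolderConjugate 2 2 := Real.HolderConjugate.two_two
  have hholder := ENNReal.lintegral_mul_le_Lp_mul_Lq volume hconj
    hfm.aemeasurable hhm.aemeasurable
  rw [← hstep1] at hholder
  have hf2 : ∀ x : E, f x ^ (2:ℝ) = (w x)⁻¹ := by
    intro x
    simp only [hf]
    rw [← ENNReal.rpow_mul, show (1:ℝ)/2*2 = 1 by norm_num, ENNReal.rpow_one]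
  have hh2 : ∀ x : E, h x ^ (2:ℝ) = w x * φ x ^ 2 := by
    intro x
    simp only [hh]
    rw [ENNReal.mul_rpow_of_nonneg _ _ (by norm_num : (0:ℝ) ≤ 2),
      ← ENNReal.rpow_mul, show (1:ℝ)/2*2 = 1 by norm_num, ENNReal.rpow_one,
      show (2:ℝ) = ((2:ℕ):ℝ) by norm_num, ENNReal.rpow_natCast]
  calc ∫⁻ x : E, φ x ≤ (∫⁻ x : E, f x ^ (2:ℝ)) ^ (1/2:ℝ) * (∫⁻ x : E, h x ^ (2:ℝ)) ^ (1/2:ℝ) :=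
        hholder
    _ = _ := by rw [lintegral_congr hf2, lintegral_congr hh2]

lemma expand_weight {φ : E → ℝ≥0∞} (hφ : Measurable φ) (R : ℝ) :
    ∫⁻ x : E, (ENNReal.ofReal R * (‖x‖₊:ℝ≥0∞)^2 + (‖x‖₊:ℝ≥0∞)^4) * φ x ^ 2
      = ENNReal.ofReal R * (∫⁻ x : E, (‖x‖₊:ℝ≥0∞)^2 * φ x ^ 2)
        + ∫⁻ x : E, (‖x‖₊:ℝ≥0∞)^4 * φ x ^ 2 := by
  have hpt : ∀ x : E, (ENNReal.ofReal R * (‖x‖₊:ℝ≥0∞)^2 + (‖x‖₊:ℝ≥0∞)^4) * φ x ^ 2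
      = ENNReal.ofReal R * ((‖x‖₊:ℝ≥0∞)^2 * φ x ^ 2) + (‖x‖₊:ℝ≥0∞)^4 * φ x ^ 2 := by
    intro x; ring
  rw [lintegral_congr hpt, lintegral_add_left (by fun_prop), lintegral_const_mul _ (by fun_prop)]

lemma eLpNorm_two_eq (f : E → ℂ) :
    eLpNorm f 2 volume = (∫⁻ x : E, (‖f x‖₊:ℝ≥0∞) ^ 2) ^ (1/2:ℝ) := by
  rw [eLpNorm_eq_lintegral_rpow_enorm_toReal two_ne_zero ENNReal.ofNat_ne_top]
  simp only [ENNReal.toReal_ofNat]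
  congr 1
  refine lintegral_congr fun x => ?_
  rw [show (2:ℝ) = ((2:ℕ):ℝ) by norm_num, ENNReal.rpow_natCast, enorm_eq_nnnorm]

/-- `‖g‖_{L¹(ℝ³)} ≤ C ‖|x| g‖_{L²}^{1/2} ‖|x|² g‖_{L²}^{1/2}` for Schwartz functions on `ℝ³`. -/
theorem L1_interpolation_weighted_L2 :
    ∃ C : ℝ, 0 < C ∧ ∀ g : SchwartzMap (EuclideanSpace ℝ (Fin 3)) ℂ,
      eLpNorm (⇑g) 1 volume ≤
        ENNReal.ofReal C *
          (eLpNorm (fun x : EuclideanSpace ℝ (Fin 3) => ‖x‖ • g x) 2 volume) ^ (1/2 : ℝ) *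
          (eLpNorm (fun x : EuclideanSpace ℝ (Fin 3) => ‖x‖ ^ 2 • g x) 2 volume) ^ (1/2 : ℝ) := by
  set J : ℝ≥0∞ := ∫⁻ x : E, ((‖x‖₊ : ℝ≥0∞) ^ 2 + (‖x‖₊ : ℝ≥0∞) ^ 4)⁻¹ with hJdef
  have hJ : J < ⊤ := J_lt_top
  refine ⟨1 + Real.sqrt (2 * J.toReal), by positivity, fun g => ?_⟩
  set φ : E → ℝ≥0∞ := fun x => (‖g x‖₊ : ℝ≥0∞) with hφdef
  have hφ : Measurable φ := by
    have := g.continuous.measurable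
    fun_prop
  set a : ℝ≥0∞ := ∫⁻ x : E, (‖x‖₊:ℝ≥0∞)^2 * φ x ^ 2 with hadef
  set b : ℝ≥0∞ := ∫⁻ x : E, (‖x‖₊:ℝ≥0∞)^4 * φ x ^ 2 with hbdef
  have hL : eLpNorm (⇑g) 1 volume = ∫⁻ x : E, φ x := by
    rw [eLpNorm_one_eq_lintegral_enorm]
    rfl
  have heA : eLpNorm (fun x : E => ‖x‖ • g x) 2 volume = a ^ (1/2:ℝ) := by
    rw [eLpNorm_two_eq]
    congr 1
    refine lintegral_congr fun x => ?_
    rw [nnnorm_smul, ENNReal.coe_mul, nnnorm_norm, mul_pow]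
  have heB : eLpNorm (fun x : E => ‖x‖ ^ 2 • g x) 2 volume = b ^ (1/2:ℝ) := by
    rw [eLpNorm_two_eq]
    congr 1
    refine lintegral_congr fun x => ?_
    rw [nnnorm_smul, ENNReal.coe_mul, nnnorm_pow, nnnorm_norm, mul_pow,
      ENNReal.coe_pow, ← pow_mul]
  rw [hL, heA, heB]
  set C : ℝ := 1 + Real.sqrt (2 * J.toReal) with hCdef
  have hC0 : ENNReal.ofReal C ≠ 0 := by
    rw [hCdef]
    simp only [ne_eq, ENNReal.ofReal_eq_zero, not_le]
    positivity
  have hae : ∀ᵐ x : E ∂volume, x ≠ (0:E) := by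
    have hset : {x : E | ¬ x ≠ 0} = {(0:E)} := by ext x; simp
    rw [ae_iff, hset]
    exact measure_singleton 0
  -- degenerate cases
  rcases eq_or_ne a 0 with ha0 | ha0
  · have h1 : (fun x : E => (‖x‖₊:ℝ≥0∞)^2 * φ x ^ 2) =ᵐ[volume] 0 :=
      (lintegral_eq_zero_iff (by fun_prop)).1 (hadef ▸ ha0)
    have hφ0 : ∫⁻ x : E, φ x = 0 := by
      rw [lintegral_eq_zero_iff hφ]
      filter_upwards [h1, hae] with x hx hxne
      simp only [Pi.zero_apply] at hx ⊢
      have hn : (‖x‖₊:ℝ≥0∞) ≠ 0 := by simpa using hxne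
      rcases mul_eq_zero.1 hx with h | h
      · exact absurd h (by simp [pow_eq_zero_iff, hn])
      · simpa using h
    rw [hφ0]
    exact zero_le
  rcases eq_or_ne b 0 with hb0 | hb0
  · have h1 : (fun x : E => (‖x‖₊:ℝ≥0∞)^4 * φ x ^ 2) =ᵐ[volume] 0 :=
      (lintegral_eq_zero_iff (by fun_prop)).1 (hbdef ▸ hb0)
    have hφ0 : ∫⁻ x : E, φ x = 0 := by
      rw [lintegral_eq_zero_iff hφ]
      filter_upwards [h1, hae] with x hx hxne
      simp only [Pi.zero_apply] at hx ⊢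
      have hn : (‖x‖₊:ℝ≥0∞) ≠ 0 := by simpa using hxne
      rcases mul_eq_zero.1 hx with h | h
      · exact absurd h (by simp [pow_eq_zero_iff, hn])
      · simpa using h
    rw [hφ0]
    exact zero_le
  rcases eq_or_ne a ⊤ with hat | hat
  · have hZ0 : (b ^ (1/2:ℝ)) ^ (1/2:ℝ) ≠ 0 := by
      simp [ENNReal.rpow_eq_zero_iff, hb0]
    rw [hat, ENNReal.top_rpow_of_pos (by norm_num), ENNReal.top_rpow_of_pos (by norm_num),
      ENNReal.mul_top hC0, ENNReal.top_mul hZ0]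
    exact le_top
  rcases eq_or_ne b ⊤ with hbt | hbt
  · have hZ0 : ENNReal.ofReal C * (a ^ (1/2:ℝ)) ^ (1/2:ℝ) ≠ 0 := by
      apply mul_ne_zero hC0
      simp [ENNReal.rpow_eq_zero_iff, ha0]
    rw [hbt, ENNReal.top_rpow_of_pos (by norm_num), ENNReal.top_rpow_of_pos (by norm_num),
      ENNReal.mul_top hZ0]
    exact le_top
  -- main case
  have hato : 0 < a.toReal := ENNReal.toReal_pos ha0 hat
  have hbto : 0 < b.toReal := ENNReal.toReal_pos hb0 hbt
  set R : ℝ := b.toReal / a.toReal with hRdef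
  have hR : 0 < R := by positivity
  have key := holder_step hφ R hR
  rw [expand_weight hφ R, scaled_weight R hR, ← hadef, ← hbdef, ← hJdef] at key
  have h1 : ENNReal.ofReal R * a = b := by
    rw [hRdef, ENNReal.ofReal_div_of_pos hato, ENNReal.ofReal_toReal hat,
      ENNReal.ofReal_toReal hbt, ENNReal.div_mul_cancel ha0 hat]
  have h2 : ENNReal.ofReal (Real.sqrt R)⁻¹ = (a / b) ^ (1/2:ℝ) := by
    rw [← Real.sqrt_inv, hRdef, inv_div, Real.sqrt_eq_rpow,
      ← ENNReal.ofReal_rpow_of_nonneg (by positivity) (by norm_num)]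
    congr 1
    rw [ENNReal.ofReal_div_of_pos hbto, ENNReal.ofReal_toReal hat,
      ENNReal.ofReal_toReal hbt]
  rw [h1, h2] at key
  have hmid : ((a/b)^(1/2:ℝ) * J)^(1/2:ℝ) * (b + b)^(1/2:ℝ)
      = ((2:ℝ≥0∞)*J)^(1/2:ℝ) * ((a^(1/2:ℝ))^(1/2:ℝ) * (b^(1/2:ℝ))^(1/2:ℝ)) := by
    rw [← two_mul]
    rw [ENNReal.mul_rpow_of_nonneg _ _ (by norm_num : (0:ℝ) ≤ 1/2),
      ENNReal.mul_rpow_of_nonneg 2 b (by norm_num : (0:ℝ) ≤ 1/2),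
      ENNReal.mul_rpow_of_nonneg 2 J (by norm_num : (0:ℝ) ≤ 1/2),
      ← ENNReal.rpow_mul, ← ENNReal.rpow_mul, ← ENNReal.rpow_mul]
    simp only [show ((1:ℝ)/2*(1/2)) = (1/4:ℝ) by norm_num]
    rw [ENNReal.div_rpow_of_nonneg _ _ (by norm_num : (0:ℝ) ≤ 1/4),
      div_eq_mul_inv, ← ENNReal.rpow_neg]
    have hb14 : b ^ (-(1/4):ℝ) * b ^ ((1:ℝ)/2) = b ^ ((1:ℝ)/4) := by
      rw [← ENNReal.rpow_add _ _ hb0 hbt]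
      norm_num
    calc a^(1/4:ℝ) * b^(-(1/4):ℝ) * J^(1/2:ℝ) * (2^(1/2:ℝ) * b^((1:ℝ)/2))
        = 2^(1/2:ℝ) * J^(1/2:ℝ) * (a^(1/4:ℝ) * (b^(-(1/4):ℝ) * b^((1:ℝ)/2))) := by ring
      _ = _ := by rw [hb14]
  have hCge : ((2:ℝ≥0∞) * J) ^ (1/2:ℝ) ≤ ENNReal.ofReal C := by
    have h2J : (2:ℝ≥0∞)*J = ENNReal.ofReal (2*J.toReal) := by
      rw [ENNReal.ofReal_mul (by norm_num), ENNReal.ofReal_toReal hJ.ne,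
        ENNReal.ofReal_ofNat]
    rw [h2J, ENNReal.ofReal_rpow_of_nonneg (by positivity) (by norm_num)]
    apply ENNReal.ofReal_le_ofReal
    rw [← Real.sqrt_eq_rpow, hCdef]
    have := Real.sqrt_nonneg (2*J.toReal)
    linarith
  calc ∫⁻ x : E, φ x ≤ ((a/b)^(1/2:ℝ) * J)^(1/2:ℝ) * (b + b)^(1/2:ℝ) := key
    _ = ((2:ℝ≥0∞)*J)^(1/2:ℝ) * ((a^(1/2:ℝ))^(1/2:ℝ) * (b^(1/2:ℝ))^(1/2:ℝ)) := hmid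
    _ ≤ ENNReal.ofReal C * ((a^(1/2:ℝ))^(1/2:ℝ) * (b^(1/2:ℝ))^(1/2:ℝ)) := by
        gcongr
    _ = ENNReal.ofReal C * (a^(1/2:ℝ))^(1/2:ℝ) * (b^(1/2:ℝ))^(1/2:ℝ) := by
        rw [mul_assoc]
end
end

section
/- Let g₀ be a positive definite symmetric 3×3 matrix, |ξ|₀ = (ξ·g₀ξ)^{1/2}, and |v|₀′ = (v·g₀⁻¹v)^{1/2}. Define φ(ξ,η) = |ξ|₀ − |ξ−η|₀ − |η|₀ (the (+,++) phase). Then for all ξ, η with ξ−η ≠ 0 and η ≠ 0: φ(ξ,η) = − (|ξ−η|₀ |η|₀ / (|ξ|₀ + |η|₀ + |ξ−η|₀)) · |∇_ηφ(ξ,η)|₀′². -/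
open scoped RealInnerProductSpace

noncomputable section

abbrev E3 := EuclideanSpace ℝ (Fin 3)

/-- The anisotropic norm `|x|₀ = (x · g₀ x)^{1/2}`. -/
def anorm (A : E3 →L[ℝ] E3) (x : E3) : ℝ := Real.sqrt ⟪A x, x⟫

lemma anorm_pos (A : E3 →L[ℝ] E3) (hpos : ∀ x : E3, x ≠ 0 → 0 < ⟪A x, x⟫)
    {x : E3} (hx : x ≠ 0) : 0 < anorm A x := Real.sqrt_pos.mpr (hpos x hx)

lemma anorm_sq (A : E3 →L[ℝ] E3) (hpos : ∀ x : E3, x ≠ 0 → 0 < ⟪A x, x⟫)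
    {x : E3} (hx : x ≠ 0) : anorm A x ^ 2 = ⟪A x, x⟫ := by
  rw [anorm, Real.sq_sqrt (hpos x hx).le]

lemma hasFDerivAt_anorm (A : E3 →L[ℝ] E3)
    (hsym : ∀ x y : E3, ⟪A x, y⟫ = ⟪x, A y⟫)
    (hpos : ∀ x : E3, x ≠ 0 → 0 < ⟪A x, x⟫) {x : E3} (hx : x ≠ 0) :
    HasFDerivAt (anorm A) (InnerProductSpace.toDual ℝ E3 ((anorm A x)⁻¹ • A x)) x := by
  have hq : HasFDerivAt (fun y : E3 => ⟪A y, y⟫)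
      ((fderivInnerCLM ℝ (A x, x)).comp (A.prod (ContinuousLinearMap.id ℝ E3))) x :=
    (A.hasFDerivAt).inner ℝ (hasFDerivAt_id x)
  have hs : HasDerivAt Real.sqrt (1 / (2 * Real.sqrt ⟪A x, x⟫)) ⟪A x, x⟫ :=
    Real.hasDerivAt_sqrt (ne_of_gt (hpos x hx))
  have h := hs.comp_hasFDerivAt (f := fun y : E3 => ⟪A y, y⟫) x hq
  refine h.congr_fderiv ?_
  ext v
  simp only [InnerProductSpace.toDual_apply_apply, ContinuousLinearMap.smul_apply,
    ContinuousLinearMap.coe_comp', Function.comp_apply, ContinuousLinearMap.prod_apply,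
    fderivInnerCLM_apply, ContinuousLinearMap.coe_id', id_eq, real_inner_smul_left]
  have h1 : ⟪A v, x⟫ = ⟪A x, v⟫ := by rw [hsym v x, real_inner_comm]
  rw [h1]
  have hy : anorm A x ≠ 0 := (anorm_pos A hpos hx).ne'
  rw [anorm] at hy ⊢
  field_simp
  rw [smul_eq_mul]
  field_simp
  ring

/-- For the `(+,++)` phase `φ(ξ,η) = |ξ|₀ − |ξ−η|₀ − |η|₀` one has
`φ = −(|ξ−η|₀|η|₀/(|ξ|₀+|η|₀+|ξ−η|₀)) |∇_ηφ|₀′²`, where `|v|₀′² = v·g₀⁻¹v`. -/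
theorem phase_identity_plus_plusplus (A B : E3 →L[ℝ] E3)
    (hsym : ∀ x y : E3, ⟪A x, y⟫ = ⟪x, A y⟫)
    (hpos : ∀ x : E3, x ≠ 0 → 0 < ⟪A x, x⟫)
    (hBA : ∀ x, B (A x) = x) (hAB : ∀ x, A (B x) = x)
    (ξ η : E3) (hξ : ξ ≠ 0) (hη : η ≠ 0) (hξη : ξ - η ≠ 0) :
    anorm A ξ - anorm A (ξ - η) - anorm A η
      = -((anorm A (ξ - η) * anorm A η) / (anorm A ξ + anorm A η + anorm A (ξ - η)))
          * ⟪gradient (fun η' => anorm A ξ - anorm A (ξ - η') - anorm A η') η,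
              B (gradient (fun η' => anorm A ξ - anorm A (ξ - η') - anorm A η') η)⟫ := by
  set a := ξ - η with ha
  set G : E3 := (anorm A a)⁻¹ • A a - (anorm A η)⁻¹ • A η with hG
  -- gradient computation
  have h1 : HasFDerivAt (fun η' : E3 => anorm A (ξ - η'))
      ((InnerProductSpace.toDual ℝ E3 ((anorm A a)⁻¹ • A a)).comp
        ((0 : E3 →L[ℝ] E3) - ContinuousLinearMap.id ℝ E3)) η :=
    by have h := (hasFDerivAt_anorm A hsym hpos hξη).comp η
         ((hasFDerivAt_const ξ η).sub (hasFDerivAt_id η))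
       exact h
  have h2 := hasFDerivAt_anorm A hsym hpos hη
  have hφ : HasGradientAt (fun η' : E3 => anorm A ξ - anorm A (ξ - η') - anorm A η') G η := by
    rw [hasGradientAt_iff_hasFDerivAt]
    have h := ((hasFDerivAt_const (anorm A ξ) η).sub h1).sub h2
    refine h.congr_fderiv ?_
    ext v
    simp [hG, inner_sub_left, real_inner_smul_left]
  rw [hφ.gradient]
  have hBG : B G = (anorm A a)⁻¹ • a - (anorm A η)⁻¹ • η := by
    rw [hG, map_sub, map_smul, map_smul, hBA, hBA]
  set α := anorm A a
  set β := anorm A η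
  set γ := anorm A ξ
  have hα : 0 < α := anorm_pos A hpos hξη
  have hβ : 0 < β := anorm_pos A hpos hη
  have hγ : 0 < γ := anorm_pos A hpos hξ
  have hab : ⟪A η, a⟫ = ⟪A a, η⟫ := by rw [hsym η a, real_inner_comm]
  have hinner : ⟪G, B G⟫ = 2 - 2 * ⟪A a, η⟫ / (α * β) := by
    have hq1 : ⟪A a, a⟫ = α ^ 2 := (anorm_sq A hpos hξη).symm
    have hq2 : ⟪A η, η⟫ = β ^ 2 := (anorm_sq A hpos hη).symm
    rw [hBG, hG]
    simp only [inner_sub_left, inner_sub_right, real_inner_smul_left, real_inner_smul_right,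
      hq1, hq2, hab]
    field_simp
    ring
  have hsq : γ ^ 2 = α ^ 2 + β ^ 2 + 2 * ⟪A a, η⟫ := by
    have hx : ξ = a + η := by rw [ha]; abel
    have hth : γ ^ 2 = ⟪A ξ, ξ⟫ := anorm_sq A hpos hξ
    rw [hx, map_add, inner_add_left, inner_add_right, inner_add_right, hab] at hth
    linarith [anorm_sq A hpos hξη, anorm_sq A hpos hη]
  rw [hinner]
  set t := (⟪A a, η⟫ : ℝ) with ht
  have hs : 0 < γ + β + α := by linarith
  field_simp
  linear_combination hsq
end
end
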